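/- Let a < b be real numbers and let f : [a,b] → ℝ be absolutely continuous on [a,b] with f' ∈ L²[a,b], and assume f is symmetric about the line x = (a+b)/2, i.e., f(a+b−x) = f(x) for all x ∈ [a,b]. Set σ(f') = ‖f'‖₂² − (f(b) − f(a))²/(b − a). Then for all x ∈ [a, (a+b)/2], |f(x) − (1/(b−a)) ∫_a^b f(t) dt| ≤ (b−a)^{−1/2} · [ (b−a)²/48 + (x − (3a+b)/4)² ]^{1/2} · √(σ(f')). -/

import Mathlib

/-!
Let `y = a + b - x`. Integrating by parts against linear kernels on `[a, x]`, `[x, y]`, `[y, b]`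
and using `f y = f x` gives `(b - a) f x - ∫ f = ∫ K f'`, where `K` is the average of the
Montgomery kernels at `x` and `y`. Since `f b = f a`, `σ = ‖f'‖₂²`, so Cauchy–Schwarz bounds the
left side by `‖K‖₂ √σ`, and `‖K‖₂² = (b - a) ((b - a)² / 48 + (x - (3a + b) / 4)²)` is a direct
computation.
-/

open MeasureTheory Set intervalIntegral

theorem integral_sub_mul_eq_of_sub_eq_integral {f f' : ℝ → ℝ} {p q : ℝ}
    (hf' : IntervalIntegrable f' volume p q)
    (hf : ∀ x ∈ uIcc p q, f x - f p = ∫ t in p..x, f' t) (c : ℝ) :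
    ∫ t in p..q, (t - c) * f' t = (q - c) * f q - (p - c) * f p - ∫ t in p..q, f t := by
  set F : ℝ → ℝ := fun x => ∫ t in p..x, f' t
  have hF : AbsolutelyContinuousOnInterval F p q :=
    hf'.absolutelyContinuousOnInterval_intervalIntegral left_mem_uIcc
  have hlin : AbsolutelyContinuousOnInterval (fun t => t - c) p q :=
    (contDiff_id.sub contDiff_const).contDiffOn.absolutelyContinuousOnInterval
  have hderiv : ∫ t in p..q, (t - c) * f' t = ∫ t in p..q, (t - c) * deriv F t := by
    refine integral_congr_ae ?_
    filter_upwards [hf'.ae_hasDerivAt_integral] with t ht htI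
    rw [(ht (uIoc_subset_uIcc htI) p left_mem_uIcc).deriv]
  have hfF : ∫ t in p..q, f t = ∫ t in p..q, (f p + F t) := by
    refine integral_congr fun x hx => ?_
    simp only [F, ← hf x hx]
    ring
  rw [hderiv, hlin.integral_mul_deriv_eq_deriv_mul hF, hfF,
    integral_add intervalIntegrable_const hF.continuousOn.intervalIntegrable]
  simp only [F, ← hf q right_mem_uIcc, integral_same, deriv_sub_const, deriv_id'', one_mul,
    intervalIntegral.integral_const]
  ring

theorem sub_eq_intervalIntegral_of_mem_Icc {f f' : ℝ → ℝ} {a b p x : ℝ}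
    (hf' : IntervalIntegrable f' volume a b) (hf : ∀ x ∈ Icc a b, f x - f a = ∫ t in a..x, f' t)
    (hp : p ∈ Icc a b) (hx : x ∈ Icc a b) : f x - f p = ∫ t in p..x, f' t := by
  rw [← integral_interval_sub_left (hf'.mono_set (uIcc_subset_uIcc_left (Icc_subset_uIcc hx)))
    (hf'.mono_set (uIcc_subset_uIcc_left (Icc_subset_uIcc hp))), ← hf x hx, ← hf p hp]
  ring

theorem integral_sub_mul_eq_of_mem_Icc {f f' : ℝ → ℝ} {a b p q : ℝ}
    (hf' : IntervalIntegrable f' volume a b) (hf : ∀ x ∈ Icc a b, f x - f a = ∫ t in a..x, f' t)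
    (hp : p ∈ Icc a b) (hq : q ∈ Icc a b) (c : ℝ) :
    ∫ t in p..q, (t - c) * f' t = (q - c) * f q - (p - c) * f p - ∫ t in p..q, f t :=
  integral_sub_mul_eq_of_sub_eq_integral
    (hf'.mono_set (uIcc_subset_uIcc (Icc_subset_uIcc hp) (Icc_subset_uIcc hq)))
    (fun _ hx => sub_eq_intervalIntegral_of_mem_Icc hf' hf hp (uIcc_subset_Icc hp hq hx)) c

theorem intervalIntegrable_sub_mul_of_mem_Icc {f' : ℝ → ℝ} {a b p q : ℝ}
    (hf' : IntervalIntegrable f' volume a b) (c : ℝ) (hp : p ∈ Icc a b) (hq : q ∈ Icc a b) :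
    IntervalIntegrable (fun t => (t - c) * f' t) volume p q :=
  (hf'.continuousOn_mul (continuous_sub_right c).continuousOn).mono_set
    (uIcc_subset_uIcc (Icc_subset_uIcc hp) (Icc_subset_uIcc hq))

section Split

variable {E : Type*} {u v : ℝ → E} {a x b : ℝ}

theorem eqOn_ite_le_left (hax : a ≤ x) :
    EqOn (fun t => if t ≤ x then u t else v t) u (uIoc a x) := by
  intro t ht
  rw [uIoc_of_le hax] at ht
  simp only [if_pos ht.2]

theorem eqOn_ite_le_right (hxb : x ≤ b) :
    EqOn (fun t => if t ≤ x then u t else v t) v (uIoc x b) := by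
  intro t ht
  rw [uIoc_of_le hxb] at ht
  simp only [if_neg (not_le.2 ht.1)]

theorem IntervalIntegrable.ite_le [NormedAddCommGroup E] (hax : a ≤ x) (hxb : x ≤ b)
    (hu : IntervalIntegrable u volume a x) (hv : IntervalIntegrable v volume x b) :
    IntervalIntegrable (fun t => if t ≤ x then u t else v t) volume a b :=
  ((intervalIntegrable_congr (eqOn_ite_le_left hax)).2 hu).trans
    ((intervalIntegrable_congr (eqOn_ite_le_right hxb)).2 hv)

theorem intervalIntegral.integral_ite_le [NormedAddCommGroup E] [NormedSpace ℝ E]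
    (hax : a ≤ x) (hxb : x ≤ b)
    (hu : IntervalIntegrable u volume a x) (hv : IntervalIntegrable v volume x b) :
    ∫ t in a..b, (if t ≤ x then u t else v t) = (∫ t in a..x, u t) + ∫ t in x..b, v t := by
  rw [← integral_add_adjacent_intervals ((intervalIntegrable_congr (eqOn_ite_le_left hax)).2 hu)
    ((intervalIntegrable_congr (eqOn_ite_le_right hxb)).2 hv),
    integral_congr_ae (.of_forall (eqOn_ite_le_left hax)),
    integral_congr_ae (.of_forall (eqOn_ite_le_right hxb))]

end Split

theorem intervalIntegral.integral_sub_sq (c p q : ℝ) :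
    ∫ t in p..q, (t - c) ^ 2 = ((q - c) ^ 3 - (p - c) ^ 3) / 3 := by
  rw [integral_comp_sub_right (· ^ 2) c, integral_pow]
  norm_num

theorem sq_intervalIntegral_mul_le {u v : ℝ → ℝ} {a b : ℝ} {μ : Measure ℝ} (hab : a ≤ b)
    (hu : IntervalIntegrable (fun t => u t ^ 2) μ a b)
    (hv : IntervalIntegrable (fun t => v t ^ 2) μ a b)
    (huv : IntervalIntegrable (fun t => u t * v t) μ a b) :
    (∫ t in a..b, u t * v t ∂μ) ^ 2 ≤ (∫ t in a..b, u t ^ 2 ∂μ) * ∫ t in a..b, v t ^ 2 ∂μ := by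
  have hquad : ∀ l : ℝ, 0 ≤ (∫ t in a..b, v t ^ 2 ∂μ) * (l * l)
      + (-2 * ∫ t in a..b, u t * v t ∂μ) * l + ∫ t in a..b, u t ^ 2 ∂μ := by
    intro l
    have hexpand : ∫ t in a..b, (u t - l * v t) ^ 2 ∂μ = (∫ t in a..b, u t ^ 2 ∂μ)
        - 2 * l * (∫ t in a..b, u t * v t ∂μ) + l ^ 2 * ∫ t in a..b, v t ^ 2 ∂μ := by
      rw [← intervalIntegral.integral_const_mul, ← intervalIntegral.integral_const_mul,
        ← integral_sub hu (huv.const_mul _),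
        ← integral_add (hu.sub (huv.const_mul _)) (hv.const_mul _)]
      exact integral_congr fun t _ => by ring
    have hnonneg := integral_nonneg (μ := μ) hab fun t _ => sq_nonneg (u t - l * v t)
    linarith
  have hdiscrim := discrim_le_zero hquad
  rw [discrim] at hdiscrim
  linarith

theorem abs_div_le_of_sq_le {A L E σ : ℝ} (hL : 0 < L) (hE : 0 ≤ E) (h : A ^ 2 ≤ L * E * σ) :
    |A / L| ≤ (√L)⁻¹ * √E * √σ := by
  have hA : |A| ≤ √L * √E * √σ := by
    rw [← Real.sqrt_mul hL.le, ← Real.sqrt_mul (by positivity)]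
    exact Real.abs_le_sqrt h
  rw [abs_div, abs_of_pos hL, div_le_iff₀ hL]
  calc |A| ≤ √L * √E * √σ := hA
    _ = L / √L * √E * √σ := by rw [Real.div_sqrt]
    _ = (√L)⁻¹ * √E * √σ * L := by ring

section CompanionKernel

variable {a b x : ℝ}

/-- The average of the Montgomery kernels (`t - a` for `t ≤ x`, `t - b` for `t > x`) at `x` and
at its mirror point `a + b - x`. -/
noncomputable def companionKernel (a b x t : ℝ) : ℝ :=
  if t ≤ x then t - a else if t ≤ a + b - x then t - (a + b) / 2 else t - b

theorem le_mirror_le_of_mem_Icc_midpoint (hx : x ∈ Icc a ((a + b) / 2)) :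
    a ≤ x ∧ x ≤ a + b - x ∧ a + b - x ≤ b :=
  ⟨hx.1, by linarith [hx.2], by linarith [hx.1, hx.2]⟩

theorem comp_companionKernel_eq (h : ℝ → ℝ → ℝ) (t : ℝ) :
    h (companionKernel a b x t) t = if t ≤ x then h (t - a) t
      else if t ≤ a + b - x then h (t - (a + b) / 2) t else h (t - b) t := by
  unfold companionKernel
  split_ifs <;> rfl

theorem intervalIntegrable_comp_companionKernel (h : ℝ → ℝ → ℝ) (hx : x ∈ Icc a ((a + b) / 2))
    (h₁ : IntervalIntegrable (fun t => h (t - a) t) volume a x)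
    (h₂ : IntervalIntegrable (fun t => h (t - (a + b) / 2) t) volume x (a + b - x))
    (h₃ : IntervalIntegrable (fun t => h (t - b) t) volume (a + b - x) b) :
    IntervalIntegrable (fun t => h (companionKernel a b x t) t) volume a b := by
  obtain ⟨hax, hxy, hyb⟩ := le_mirror_le_of_mem_Icc_midpoint hx
  simp only [comp_companionKernel_eq]
  exact h₁.ite_le hax (hxy.trans hyb) (h₂.ite_le hxy hyb h₃)

theorem integral_comp_companionKernel (h : ℝ → ℝ → ℝ) (hx : x ∈ Icc a ((a + b) / 2))
    (h₁ : IntervalIntegrable (fun t => h (t - a) t) volume a x)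
    (h₂ : IntervalIntegrable (fun t => h (t - (a + b) / 2) t) volume x (a + b - x))
    (h₃ : IntervalIntegrable (fun t => h (t - b) t) volume (a + b - x) b) :
    ∫ t in a..b, h (companionKernel a b x t) t = (∫ t in a..x, h (t - a) t)
      + (∫ t in x..(a + b - x), h (t - (a + b) / 2) t) + ∫ t in (a + b - x)..b, h (t - b) t := by
  obtain ⟨hax, hxy, hyb⟩ := le_mirror_le_of_mem_Icc_midpoint hx
  simp only [comp_companionKernel_eq]
  rw [integral_ite_le hax (hxy.trans hyb) h₁ (h₂.ite_le hxy hyb h₃), integral_ite_le hxy hyb h₂ h₃,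
    add_assoc]

theorem intervalIntegrable_companionKernel_sq (hx : x ∈ Icc a ((a + b) / 2)) :
    IntervalIntegrable (fun t => companionKernel a b x t ^ 2) volume a b :=
  intervalIntegrable_comp_companionKernel (fun k _ => k ^ 2) hx
    (((continuous_sub_right a).pow 2).intervalIntegrable _ _)
    (((continuous_sub_right _).pow 2).intervalIntegrable _ _)
    (((continuous_sub_right b).pow 2).intervalIntegrable _ _)

theorem integral_companionKernel_sq (hx : x ∈ Icc a ((a + b) / 2)) :
    ∫ t in a..b, companionKernel a b x t ^ 2
      = (b - a) * ((b - a) ^ 2 / 48 + (x - (3 * a + b) / 4) ^ 2) := by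
  rw [integral_comp_companionKernel (fun k _ => k ^ 2) hx
    (((continuous_sub_right a).pow 2).intervalIntegrable _ _)
    (((continuous_sub_right _).pow 2).intervalIntegrable _ _)
    (((continuous_sub_right b).pow 2).intervalIntegrable _ _)]
  simp only [integral_sub_sq]
  ring

theorem intervalIntegrable_companionKernel_mul {f' : ℝ → ℝ}
    (hf' : IntervalIntegrable f' volume a b) (hx : x ∈ Icc a ((a + b) / 2)) :
    IntervalIntegrable (fun t => companionKernel a b x t * f' t) volume a b := by
  obtain ⟨hax, hxy, hyb⟩ := le_mirror_le_of_mem_Icc_midpoint hx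
  have hab : a ≤ b := hax.trans (hxy.trans hyb)
  exact intervalIntegrable_comp_companionKernel (fun k t => k * f' t) hx
    (intervalIntegrable_sub_mul_of_mem_Icc hf' a (left_mem_Icc.2 hab) ⟨hax, hxy.trans hyb⟩)
    (intervalIntegrable_sub_mul_of_mem_Icc hf' _ ⟨hax, hxy.trans hyb⟩ ⟨hax.trans hxy, hyb⟩)
    (intervalIntegrable_sub_mul_of_mem_Icc hf' b ⟨hax.trans hxy, hyb⟩ (right_mem_Icc.2 hab))

theorem integral_companionKernel_mul {f f' : ℝ → ℝ} (hf' : IntervalIntegrable f' volume a b)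
    (hcont : ContinuousOn f (Icc a b)) (hf : ∀ x ∈ Icc a b, f x - f a = ∫ t in a..x, f' t)
    (hx : x ∈ Icc a ((a + b) / 2)) (hsym : f (a + b - x) = f x) :
    ∫ t in a..b, companionKernel a b x t * f' t = (b - a) * f x - ∫ t in a..b, f t := by
  obtain ⟨hax, hxy, hyb⟩ := le_mirror_le_of_mem_Icc_midpoint hx
  have hab : a ≤ b := hax.trans (hxy.trans hyb)
  have haI : a ∈ Icc a b := left_mem_Icc.2 hab
  have hbI : b ∈ Icc a b := right_mem_Icc.2 hab
  have hxI : x ∈ Icc a b := ⟨hax, hxy.trans hyb⟩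
  have hyI : a + b - x ∈ Icc a b := ⟨hax.trans hxy, hyb⟩
  have hfint : ∀ {p q}, p ∈ Icc a b → q ∈ Icc a b → IntervalIntegrable f volume p q :=
    fun hp hq => (hcont.mono (uIcc_subset_Icc hp hq)).intervalIntegrable
  rw [integral_comp_companionKernel (fun k t => k * f' t) hx
      (intervalIntegrable_sub_mul_of_mem_Icc hf' a haI hxI)
      (intervalIntegrable_sub_mul_of_mem_Icc hf' _ hxI hyI)
      (intervalIntegrable_sub_mul_of_mem_Icc hf' b hyI hbI),
    integral_sub_mul_eq_of_mem_Icc hf' hf haI hxI, integral_sub_mul_eq_of_mem_Icc hf' hf hxI hyI,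
    integral_sub_mul_eq_of_mem_Icc hf' hf hyI hbI,
    ← integral_add_adjacent_intervals (hfint haI hxI) (hfint hxI hbI),
    ← integral_add_adjacent_intervals (hfint hxI hyI) (hfint hyI hbI), hsym]
  ring

end CompanionKernel

/-- **Ostrowski type inequality for symmetric `f` with `f' ∈ L²[a,b]`** (Corollary 2.12,
inequality (2.37)): if additionally `f (a + b - x) = f x` on `[a,b]`, then for all
`x ∈ [a, (a+b)/2]`, with `σ(f') = ∫_a^b f'(t)² dt - (f b - f a)²/(b - a)`,
`|f x - (1/(b-a)) ∫_a^b f| ≤ (b-a)^{-1/2} · √((b-a)²/48 + (x - (3a+b)/4)²) · √(σ(f'))`. -/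
theorem companion_ostrowski_first_deriv_L2_symmetric
    (a b : ℝ) (hab : a < b) (f f' : ℝ → ℝ)
    (hcont : ContinuousOn f (Set.Icc a b))
    (hint : IntervalIntegrable f' MeasureTheory.volume a b)
    (hftc : ∀ x ∈ Set.Icc a b, f x - f a = ∫ t in a..x, f' t)
    (hL2 : IntervalIntegrable (fun t => (f' t) ^ 2) MeasureTheory.volume a b)
    (hsym : ∀ x ∈ Set.Icc a b, f (a + b - x) = f x)
    (σ : ℝ) (hσ : σ = (∫ t in a..b, (f' t) ^ 2) - (f b - f a) ^ 2 / (b - a)) :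
    ∀ x ∈ Set.Icc a ((a + b) / 2),
      |f x - (1 / (b - a)) * ∫ t in a..b, f t|
        ≤ (Real.sqrt (b - a))⁻¹ *
            Real.sqrt ((b - a) ^ 2 / 48 + (x - (3 * a + b) / 4) ^ 2) * Real.sqrt σ := by
  intro x hx
  have hxI : x ∈ Icc a b := ⟨hx.1, hx.2.trans (by linarith)⟩
  have hfba : f b = f a := by simpa using hsym a (left_mem_Icc.2 hab.le)
  have hσ' : σ = ∫ t in a..b, f' t ^ 2 := by simp [hσ, hfba]
  have hcs := sq_intervalIntegral_mul_le hab.le (intervalIntegrable_companionKernel_sq hx) hL2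
    (intervalIntegrable_companionKernel_mul hint hx)
  rw [integral_companionKernel_mul hint hcont hftc hx (hsym x hxI), integral_companionKernel_sq hx,
    ← hσ'] at hcs
  have hmean : f x - 1 / (b - a) * ∫ t in a..b, f t
      = ((b - a) * f x - ∫ t in a..b, f t) / (b - a) := by
    field_simp [(sub_pos.2 hab).ne']
  rw [hmean]
  exact abs_div_le_of_sq_le (sub_pos.2 hab) (by positivity) hcs
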